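/- arXiv:1909.05375 — 3 statements merged into one kernel-verified Lean document; each statement's English description precedes it below -/
import Mathlib

section
/- Let (l_n) and (k_n) be sequences of positive integers such that (1 − 2^{−l_n})^{k_n} → 1 and k_n · l_n · 2^{−l_n} → ∞ as n → ∞. Define f_n : {-1,1}^{[k_n]×[l_n]} → {−1,0,1} by f_n(ω) = Tribes(l_n,k_n)(ω) − Tribes(l_n,k_n)(−ω). Then, with ω uniform: (i) ℙ[f_n(ω) = 0] → 1; (ii) there is a sequence of positive integers a_n → ∞ such that ℙ[ f_n(ω) = 0 and |{(t,i) : f_n(ω^{(t,i)}) = 1}| > a_n and |{(t,i) : f_n(ω^{(t,i)}) = −1}| > a_n ] → 1, where ω^{(t,i)} denotes ω with coordinate (t,i) flipped. -/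
open Finset Filter

attribute [local instance] Classical.propDecidable

/-- The discrete hypercube indexed by `ι`: `true` encodes `+1`, `false` encodes `-1`
(so the pointwise `Bool` order, with `false < true`, is the coordinatewise partial
order on `{-1,1}^ι` with `-1 < 1`). -/
abbrev Cube (ι : Type) := ι → Bool

/-- `ω` with its `i`-th coordinate flipped. -/
def flipAt {ι : Type} [DecidableEq ι] (ω : Cube ι) (i : ι) : Cube ι :=
  fun j => if j = i then !ω j else ω j

/-- The pivotal set `𝒫(f, ω)`: coordinates whose flip changes the value of `f`. -/
noncomputable def pivSet {ι : Type} [DecidableEq ι] [Fintype ι] {β : Type}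
    (f : Cube ι → β) (ω : Cube ι) : Finset ι :=
  Finset.univ.filter fun i => f (flipAt ω i) ≠ f ω

/-- Probability of the event `p` under the uniform measure on the hypercube. -/
noncomputable def unifProb {ι : Type} [DecidableEq ι] [Fintype ι] (p : Cube ι → Prop) : ℝ :=
  ((Finset.univ.filter p).card : ℝ) / (Fintype.card (Cube ι) : ℝ)

/-- Expectation of `X` under the uniform measure on the hypercube. -/
noncomputable def unifExp {ι : Type} [DecidableEq ι] [Fintype ι] (X : Cube ι → ℝ) : ℝ :=
  (∑ ω : Cube ι, X ω) / (Fintype.card (Cube ι) : ℝ)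

/-- Conditional expectation of `X` given the event `A`, under the uniform measure. -/
noncomputable def condExpect {ι : Type} [DecidableEq ι] [Fintype ι]
    (X : Cube ι → ℝ) (A : Cube ι → Prop) : ℝ :=
  (∑ ω ∈ Finset.univ.filter A, X ω) / ((Finset.univ.filter A).card : ℝ)

/-- `Tribes(l,k)` as a `{0,1}`-valued integer function on `{-1,1}^{[k]×[l]}`:
value `1` iff some tribe `t ∈ [k]` has all of its `l` bits equal to `+1` (`true`). -/
noncomputable def tribes (k l : ℕ) (ω : Cube (Fin k × Fin l)) : ℤ :=
  if ∃ t : Fin k, ∀ i : Fin l, ω (t, i) = true then 1 else 0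

/-- Coordinatewise negation `-ω`. -/
def negCube {ι : Type} (ω : Cube ι) : Cube ι := fun x => !ω x

/-- The number of pivotal tribes: tribes having exactly one `-1` (`false`) bit. -/
noncomputable def pivTribeCount (k l : ℕ) (ω : Cube (Fin k × Fin l)) : ℕ :=
  (Finset.univ.filter fun t : Fin k => ∃! i : Fin l, ω (t, i) = false).card

/-- Single-coordinate weight of the `ε`-noise joint distribution `ν_ε`. -/
noncomputable def noiseWeight (ε : ℝ) (b b' : Bool) : ℝ :=
  if b = b' then (1 - ε / 2) / 2 else ε / 4

/-- Probability of the event `E` under the `ε`-noise joint distribution `ν_ε`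
(the product over coordinates of the single-coordinate weights). -/
noncomputable def noiseProb {ι : Type} [DecidableEq ι] [Fintype ι] (ε : ℝ)
    (E : Cube ι → Cube ι → Prop) : ℝ :=
  ∑ ω : Cube ι, ∑ ω' : Cube ι,
    if E ω ω' then ∏ i : ι, noiseWeight ε (ω i) (ω' i) else 0

/-- `f` is transitive: it is invariant under some subgroup of permutations of the
coordinate set acting transitively, where `(σ · ω) x = ω (σ⁻¹ x)`. -/
def TransitiveInvariant {ι : Type} {β : Type} (f : Cube ι → β) : Prop :=
  ∃ G : Subgroup (Equiv.Perm ι),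
    (∀ x y : ι, ∃ σ ∈ G, σ x = y) ∧
    ∀ σ ∈ G, ∀ ω : Cube ι, f (fun x => ω (σ⁻¹ x)) = f ω


/-!
`f = 0` as soon as neither `ω` nor `-ω` has a tribe of `+1`s; since the tribes are independent,
each of these fails with probability `1 - (1 - 2^{-l})^k → 0`. A tribe of `ω` with exactly one
`-1` bit is pivotal: flipping that bit makes `f = 1` whenever `Tribes(-ω) = 0`, and pivotal tribes
of `-ω` likewise give flips to `f = -1`. The number of pivotal tribes is a sum of `k` pairwise
independent indicators of mean `l 2^{-l}`, so its variance is at most its mean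
`μ = k l 2^{-l} → ∞`, and by Chebyshev it exceeds `a ≈ μ / 4` with probability `1 - O(1/μ)`.
-/

section UniformCube

lemma negCube_negCube {ι : Type} (ω : Cube ι) : negCube (negCube ω) = ω :=
  funext fun x => Bool.not_not (ω x)

variable {ι : Type} [DecidableEq ι] [Fintype ι]

lemma card_cube_pos : (0 : ℝ) < Fintype.card (Cube ι) := by
  exact_mod_cast Fintype.card_pos

lemma unifProb_eq_card_div (p : Cube ι → Prop) [DecidablePred p] :
    unifProb p = (univ.filter p).card / Fintype.card (Cube ι) := by
  unfold unifProb
  congr!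

lemma unifProb_le_one (p : Cube ι → Prop) : unifProb p ≤ 1 := by
  rw [unifProb, div_le_one card_cube_pos]
  exact_mod_cast card_filter_le _ _

lemma unifProb_mono {p q : Cube ι → Prop} (h : ∀ ω, p ω → q ω) :
    unifProb p ≤ unifProb q := by
  unfold unifProb
  gcongr ?_ / _
  exact_mod_cast card_le_card (monotone_filter_right _ fun ω _ => h ω)

lemma unifProb_not (p : Cube ι → Prop) : unifProb (fun ω => ¬ p ω) = 1 - unifProb p := by
  rw [eq_sub_iff_add_eq', unifProb, unifProb_eq_card_div (fun ω => ¬ p ω), ← add_div,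
    div_eq_one_iff_eq card_cube_pos.ne', ← card_univ]
  exact_mod_cast card_filter_add_card_filter_not (s := univ) (p := p)

lemma unifProb_add_unifProb_le_unifProb_and (p q : Cube ι → Prop) :
    unifProb p + unifProb q ≤ 1 + unifProb (fun ω => p ω ∧ q ω) := by
  have hunion := card_union_add_card_inter (univ.filter p) (univ.filter q)
  have hle : (univ.filter p ∪ univ.filter q).card ≤ Fintype.card (Cube ι) := card_le_univ _
  rw [← filter_and] at hunion
  rw [unifProb, unifProb, unifProb_eq_card_div (fun ω => p ω ∧ q ω), ← add_div,
    ← div_self (card_cube_pos (ι := ι)).ne', ← add_div]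
  gcongr ?_ / _
  exact_mod_cast hunion ▸ Nat.add_le_add_right hle _

lemma unifProb_negCube (p : Cube ι → Prop) :
    unifProb (fun ω => p (negCube ω)) = unifProb p := by
  unfold unifProb
  congr 2
  exact card_bij' (fun ω _ => negCube ω) (fun ω _ => negCube ω) (by simp)
    (by simp [negCube_negCube]) (fun ω _ => negCube_negCube ω) (fun ω _ => negCube_negCube ω)

end UniformCube

section UniformExpectation

variable {ι : Type} [DecidableEq ι] [Fintype ι]

lemma unifExp_add (X Y : Cube ι → ℝ) : unifExp (X + Y) = unifExp X + unifExp Y := by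
  simp only [unifExp, Pi.add_apply, sum_add_distrib, add_div]

lemma unifExp_sub (X Y : Cube ι → ℝ) : unifExp (X - Y) = unifExp X - unifExp Y := by
  simp only [unifExp, Pi.sub_apply, sum_sub_distrib, sub_div]

lemma unifExp_const_mul (c : ℝ) (X : Cube ι → ℝ) :
    unifExp (fun ω => c * X ω) = c * unifExp X := by
  simp only [unifExp, ← mul_sum, mul_div_assoc]

lemma unifExp_const (c : ℝ) : unifExp (fun _ : Cube ι => c) = c := by
  simp [unifExp, card_univ]

lemma unifExp_sum {κ : Type} (s : Finset κ) (X : κ → Cube ι → ℝ) :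
    unifExp (fun ω => ∑ t ∈ s, X t ω) = ∑ t ∈ s, unifExp (X t) := by
  simp only [unifExp, sum_div]
  exact sum_comm

lemma unifExp_mono {X Y : Cube ι → ℝ} (h : ∀ ω, X ω ≤ Y ω) : unifExp X ≤ unifExp Y := by
  unfold unifExp
  gcongr with ω
  exact h ω

lemma unifExp_indicator (p : Cube ι → Prop) [DecidablePred p] :
    unifExp (fun ω => if p ω then 1 else 0) = unifProb p := by
  rw [unifExp, unifProb, ← sum_filter, sum_const, nsmul_one]
  congr!

lemma mul_unifProb_le_unifExp {p : Cube ι → Prop} {X : Cube ι → ℝ} {c : ℝ}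
    (hX : ∀ ω, 0 ≤ X ω) (hp : ∀ ω, p ω → c ≤ X ω) : c * unifProb p ≤ unifExp X := by
  rw [← unifExp_indicator, ← unifExp_const_mul]
  refine unifExp_mono fun ω => ?_
  split_ifs with h
  · simpa using hp ω h
  · simpa using hX ω

lemma unifProb_le_le_unifExp_sq_div {X : Cube ι → ℝ} {m a : ℝ} (ha : a < m) :
    unifProb (fun ω => X ω ≤ a) ≤ unifExp (fun ω => (X ω - m) ^ 2) / (m - a) ^ 2 := by
  rw [le_div_iff₀ (by nlinarith), mul_comm]
  refine mul_unifProb_le_unifExp (fun ω => sq_nonneg _) fun ω hω => ?_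
  nlinarith

end UniformExpectation

section SecondMoment

variable {ι κ : Type} [DecidableEq ι] [Fintype ι] [Fintype κ]

lemma unifExp_centered_indicator_mul (A B : Cube ι → Prop) (p : ℝ) :
    unifExp (fun ω => ((if A ω then 1 else 0) - p) * ((if B ω then 1 else 0) - p))
      = unifProb (fun ω => A ω ∧ B ω) - p * unifProb A - p * unifProb B + p ^ 2 := by
  have hexpand : (fun ω => ((if A ω then (1 : ℝ) else 0) - p) * ((if B ω then 1 else 0) - p))
      = (fun ω => if A ω ∧ B ω then 1 else 0) - (fun ω => p * if A ω then 1 else 0)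
        - (fun ω => p * if B ω then 1 else 0) + fun _ => p ^ 2 := by
    ext ω
    by_cases hA : A ω <;> by_cases hB : B ω <;> simp [hA, hB] <;> ring
  rw [hexpand, unifExp_add, unifExp_sub, unifExp_sub, unifExp_const_mul, unifExp_const_mul,
    unifExp_const, unifExp_indicator, unifExp_indicator, unifExp_indicator]

lemma unifExp_sq_card_filter_sub_eq (A : κ → Cube ι → Prop) {p : ℝ}
    (hA : ∀ t, unifProb (A t) = p)
    (hAA : Pairwise fun t s => unifProb (fun ω => A t ω ∧ A s ω) = p ^ 2) :
    unifExp (fun ω => ((univ.filter (A · ω)).card - Fintype.card κ * p) ^ 2)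
      = Fintype.card κ * (p - p ^ 2) := by
  have hcentered : ∀ ω, ((univ.filter (A · ω)).card - Fintype.card κ * p : ℝ)
      = ∑ t, ((if A t ω then 1 else 0) - p) := by
    intro ω
    rw [card_filter, sum_sub_distrib, sum_const, card_univ, nsmul_eq_mul]
    push_cast
    rfl
  have hcov : ∀ t s, unifExp (fun ω => ((if A t ω then 1 else 0) - p)
      * ((if A s ω then 1 else 0) - p)) = if t = s then p - p ^ 2 else 0 := by
    intro t s
    rw [unifExp_centered_indicator_mul, hA, hA]
    split_ifs with hts
    · subst hts
      simp only [and_self, hA]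
      ring
    · rw [hAA hts]
      ring
  simp only [hcentered, sq, sum_mul_sum, unifExp_sum, hcov, sum_ite_eq, mem_univ, if_true,
    sum_const, card_univ, nsmul_eq_mul]

lemma unifProb_card_filter_le_le (A : κ → Cube ι → Prop) {p : ℝ}
    (hA : ∀ t, unifProb (A t) = p)
    (hAA : Pairwise fun t s => unifProb (fun ω => A t ω ∧ A s ω) = p ^ 2)
    {a : ℕ} (ha : 2 * a ≤ Fintype.card κ * p) (hpos : 0 < Fintype.card κ * p) :
    unifProb (fun ω => (univ.filter (A · ω)).card ≤ a) ≤ 4 / (Fintype.card κ * p) := by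
  set m := Fintype.card κ * p
  calc unifProb (fun ω => (univ.filter (A · ω)).card ≤ a)
      = unifProb (fun ω => ((univ.filter (A · ω)).card : ℝ) ≤ a) := by simp only [Nat.cast_le]
    _ ≤ unifExp (fun ω => ((univ.filter (A · ω)).card - m) ^ 2) / (m - a) ^ 2 :=
        unifProb_le_le_unifExp_sq_div (by linarith)
    _ ≤ m / (m / 2) ^ 2 := by
        rw [unifExp_sq_card_filter_sub_eq A hA hAA]
        gcongr
        · nlinarith
        · linarith
    _ = 4 / m := by field_simp; ring

end SecondMoment

section Rows

variable {κ ι : Type} [DecidableEq κ] [Fintype κ] [DecidableEq ι] [Fintype ι]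

lemma unifProb_forall_row (Q : κ → Cube ι → Prop) :
    unifProb (fun ω : Cube (κ × ι) => ∀ t, Q t fun i => ω (t, i)) = ∏ t, unifProb (Q t) := by
  have hnum : (univ.filter fun ω : Cube (κ × ι) => ∀ t, Q t fun i => ω (t, i)).card
      = ∏ t, (univ.filter (Q t)).card := by
    simp only [← Fintype.card_subtype, ← Fintype.card_pi]
    exact Fintype.card_congr
      (((Equiv.curry κ ι Bool).subtypeEquiv fun _ => Iff.rfl).trans Equiv.subtypePiEquivPi)
  have hden : Fintype.card (Cube (κ × ι)) = ∏ _t : κ, Fintype.card (Cube ι) := by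
    rw [← Fintype.card_pi]
    exact Fintype.card_congr (Equiv.curry κ ι Bool)
  simp only [unifProb_eq_card_div, hnum, hden, Nat.cast_prod, prod_div_distrib]

lemma unifProb_forall_mem_row (S : Finset κ) (P : Cube ι → Prop) :
    unifProb (fun ω : Cube (κ × ι) => ∀ t ∈ S, P fun i => ω (t, i)) = unifProb P ^ S.card := by
  have hrow := unifProb_forall_row (fun t (g : Cube ι) => t ∈ S → P g)
  have htriv : unifProb (fun _ : Cube ι => True) = 1 := by
    simp [unifProb, card_univ]
  have hfactor : ∀ t, unifProb (fun g : Cube ι => t ∈ S → P g)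
      = if t ∈ S then unifProb P else 1 := by
    intro t
    split_ifs with ht <;> simp [ht, htriv]
  rw [hrow, prod_congr rfl fun t _ => hfactor t, prod_ite_mem, univ_inter, prod_const]

end Rows

section Cube

variable {ι : Type} [DecidableEq ι] [Fintype ι]

lemma card_cube : Fintype.card (Cube ι) = 2 ^ Fintype.card ι := by
  simp

lemma unifProb_forall_eq_true :
    unifProb (fun g : Cube ι => ∀ i, g i = true) = (1 / 2) ^ Fintype.card ι := by
  have hone : (univ.filter fun g : Cube ι => ∀ i, g i = true) = {fun _ => true} := by
    ext g
    simp [funext_iff]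
  rw [unifProb_eq_card_div, hone, card_singleton, card_cube]
  simp

lemma unifProb_existsUnique_eq_false :
    unifProb (fun g : Cube ι => ∃! i, g i = false)
      = Fintype.card ι * (1 / 2) ^ Fintype.card ι := by
  have himage : (univ.filter fun g : Cube ι => ∃! i, g i = false)
      = univ.image (flipAt fun _ => true) := by
    ext g
    simp only [mem_filter, mem_univ, true_and, mem_image]
    constructor
    · rintro ⟨i, hi, huniq⟩
      refine ⟨i, funext fun j => ?_⟩
      by_cases hji : j = i
      · simp [flipAt, hji, hi]
      · simpa [flipAt, hji] using mt (huniq j) hji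
    · rintro ⟨i, rfl⟩
      exact ⟨i, by simp [flipAt], fun j hj => by simpa [flipAt] using hj⟩
  have hinj : Function.Injective (flipAt (fun _ : ι => true)) := fun i j hij => by
    simpa [flipAt] using congrFun hij i
  rw [unifProb_eq_card_div, himage, card_image_of_injective _ hinj, card_univ, card_cube]
  simp [div_eq_mul_inv]

end Cube

section Tribes

variable {k l : ℕ}

lemma tribes_eq_zero_iff (ω : Cube (Fin k × Fin l)) :
    tribes k l ω = 0 ↔ ∀ t, ¬ ∀ i, ω (t, i) = true := by
  unfold tribes
  split_ifs with h <;> simpa using h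

lemma tribes_eq_one_iff (ω : Cube (Fin k × Fin l)) :
    tribes k l ω = 1 ↔ ∃ t, ∀ i, ω (t, i) = true := by
  unfold tribes
  split_ifs with h <;> simpa using h

lemma unifProb_tribes_eq_zero :
    unifProb (fun ω : Cube (Fin k × Fin l) => tribes k l ω = 0) = (1 - (1 / 2) ^ l) ^ k := by
  have hrow := unifProb_forall_mem_row (κ := Fin k) univ fun g : Cube (Fin l) => ¬ ∀ i, g i = true
  simp only [mem_univ, forall_const, unifProb_not, unifProb_forall_eq_true, card_univ,
    Fintype.card_fin] at hrow
  simpa only [tribes_eq_zero_iff] using hrow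

lemma unifProb_pivTribeCount_le {a : ℕ} (ha : 2 * a ≤ (k : ℝ) * l * (1 / 2) ^ l)
    (hpos : 0 < (k : ℝ) * l * (1 / 2) ^ l) :
    unifProb (fun ω : Cube (Fin k × Fin l) => pivTribeCount k l ω ≤ a)
      ≤ 4 / ((k : ℝ) * l * (1 / 2) ^ l) := by
  have hsingle := fun t : Fin k =>
    unifProb_forall_mem_row {t} fun g : Cube (Fin l) => ∃! i, g i = false
  have hpair := fun t s : Fin k =>
    unifProb_forall_mem_row {t, s} fun g : Cube (Fin l) => ∃! i, g i = false
  simp only [mem_singleton, forall_eq, card_singleton, pow_one, mem_insert,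
    forall_eq_or_imp, unifProb_existsUnique_eq_false, Fintype.card_fin] at hsingle hpair
  have hpiv := unifProb_card_filter_le_le
    (fun t (ω : Cube (Fin k × Fin l)) => ∃! i, ω (t, i) = false) hsingle (fun t s hts => (hpair t s).trans (by rw [card_pair hts])) (a := a)
    (by simpa [mul_assoc] using ha) (by simpa [mul_assoc] using hpos)
  simpa [pivTribeCount, mul_assoc] using hpiv

end Tribes

section Flips

lemma negCube_flipAt {ι : Type} [DecidableEq ι] (ω : Cube ι) (x : ι) :
    negCube (flipAt ω x) = flipAt (negCube ω) x := by
  funext j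
  unfold negCube flipAt
  split_ifs <;> rfl

lemma card_filter_flipAt_eq_neg_one {ι : Type} [DecidableEq ι] [Fintype ι] (g : Cube ι → ℤ)
    (ω : Cube ι) :
    (univ.filter fun x => g (flipAt ω x) - g (negCube (flipAt ω x)) = -1).card
      = (univ.filter fun x =>
          g (flipAt (negCube ω) x) - g (negCube (flipAt (negCube ω) x)) = 1).card := by
  congr 1
  ext x
  simp only [mem_filter, mem_univ, true_and, ← negCube_flipAt, negCube_negCube]
  omega

variable {k l : ℕ}

lemma tribes_flipAt_eq_zero {ω : Cube (Fin k × Fin l)} {x : Fin k × Fin l}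
    (h0 : tribes k l ω = 0) (hx : ω x = true) : tribes k l (flipAt ω x) = 0 := by
  rw [tribes_eq_zero_iff] at h0 ⊢
  intro t hall
  refine h0 t fun i => ?_
  have hi := hall i
  unfold flipAt at hi
  split_ifs at hi with hxe
  · simp [hxe, hx] at hi
  · exact hi

lemma tribes_flipAt_eq_one {ω : Cube (Fin k × Fin l)} {t : Fin k} {i : Fin l}
    (hi : ω (t, i) = false) (huniq : ∀ j, ω (t, j) = false → j = i) :
    tribes k l (flipAt ω (t, i)) = 1 := by
  rw [tribes_eq_one_iff]
  refine ⟨t, fun j => ?_⟩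
  by_cases hji : j = i
  · simp [flipAt, hji, hi]
  · simpa [flipAt, hji] using mt (huniq j) hji

/-- The unique `-1` bit of a pivotal tribe of `ω` is `+1` in `-ω`, so flipping it completes
that tribe of `ω` but cannot complete a tribe of `-ω`. -/
lemma pivTribeCount_le_card_filter_flipAt {ω : Cube (Fin k × Fin l)}
    (h0 : tribes k l (negCube ω) = 0) :
    pivTribeCount k l ω ≤ (univ.filter fun x =>
      tribes k l (flipAt ω x) - tribes k l (negCube (flipAt ω x)) = 1).card := by
  refine card_le_card_of_surjOn Prod.fst fun t ht => ?_
  obtain ⟨i, hi, huniq⟩ := (mem_filter.1 ht).2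
  refine ⟨(t, i), mem_filter.2 ⟨mem_univ _, ?_⟩, rfl⟩
  rw [tribes_flipAt_eq_one hi huniq, negCube_flipAt,
    tribes_flipAt_eq_zero h0 (by simp [negCube, hi]), sub_zero]

end Flips

def ManyPivotalTribes (k l a : ℕ) (ω : Cube (Fin k × Fin l)) : Prop :=
  tribes k l ω = 0 ∧ tribes k l (negCube ω) = 0 ∧
    a < pivTribeCount k l ω ∧ a < pivTribeCount k l (negCube ω)

section ManyPivotalTribes

variable {k l : ℕ}

lemma one_sub_le_unifProb_manyPivotalTribes {a : ℕ}
    (ha : 2 * a ≤ (k : ℝ) * l * (1 / 2) ^ l) (hpos : 0 < (k : ℝ) * l * (1 / 2) ^ l) :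
    1 - (2 * (1 - (1 - (1 / 2) ^ l) ^ k) + 8 / ((k : ℝ) * l * (1 / 2) ^ l))
      ≤ unifProb (ManyPivotalTribes k l a) := by
  have hpiv : 1 - 4 / ((k : ℝ) * l * (1 / 2) ^ l)
      ≤ unifProb (fun ω : Cube (Fin k × Fin l) => a < pivTribeCount k l ω) := by
    have hnot := unifProb_not fun ω : Cube (Fin k × Fin l) => pivTribeCount k l ω ≤ a
    simp only [not_le] at hnot
    linarith [unifProb_pivTribeCount_le ha hpos]
  have hpiv' := hpiv.trans_eq (unifProb_negCube fun ω => a < pivTribeCount k l ω).symm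
  have hzero' := (unifProb_negCube fun ω : Cube (Fin k × Fin l) => tribes k l ω = 0).trans
    unifProb_tribes_eq_zero
  have hand₁ := unifProb_add_unifProb_le_unifProb_and
    (fun ω : Cube (Fin k × Fin l) => tribes k l ω = 0)
    fun ω => tribes k l (negCube ω) = 0 ∧ a < pivTribeCount k l ω ∧
      a < pivTribeCount k l (negCube ω)
  have hand₂ := unifProb_add_unifProb_le_unifProb_and
    (fun ω : Cube (Fin k × Fin l) => tribes k l (negCube ω) = 0)
    fun ω => a < pivTribeCount k l ω ∧ a < pivTribeCount k l (negCube ω)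
  have hand₃ := unifProb_add_unifProb_le_unifProb_and
    (fun ω : Cube (Fin k × Fin l) => a < pivTribeCount k l ω)
    fun ω => a < pivTribeCount k l (negCube ω)
  beta_reduce at hand₁ hand₂ hand₃
  have h8 : 8 / ((k : ℝ) * l * (1 / 2) ^ l) = 2 * (4 / ((k : ℝ) * l * (1 / 2) ^ l)) := by ring
  unfold ManyPivotalTribes
  linarith [unifProb_tribes_eq_zero (k := k) (l := l)]

lemma ManyPivotalTribes.tribes_sub_negCube_eq_zero_and_lt_card_flipAt {a : ℕ}
    {ω : Cube (Fin k × Fin l)} (h : ManyPivotalTribes k l a ω) :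
    tribes k l ω - tribes k l (negCube ω) = 0 ∧
    a < (univ.filter fun x =>
      tribes k l (flipAt ω x) - tribes k l (negCube (flipAt ω x)) = 1).card ∧
    a < (univ.filter fun x =>
      tribes k l (flipAt ω x) - tribes k l (negCube (flipAt ω x)) = -1).card := by
  obtain ⟨h0, h0', hpiv, hpiv'⟩ := h
  refine ⟨by rw [h0, h0', sub_zero], hpiv.trans_le (pivTribeCount_le_card_filter_flipAt h0'), ?_⟩
  rw [card_filter_flipAt_eq_neg_one]
  exact hpiv'.trans_le (pivTribeCount_le_card_filter_flipAt (by rwa [negCube_negCube]))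

end ManyPivotalTribes

lemma tendsto_unifProb_manyPivotalTribes {l k : ℕ → ℕ}
    (h1 : Tendsto (fun n => (1 - (1 / 2 : ℝ) ^ l n) ^ k n) atTop (nhds 1))
    (h2 : Tendsto (fun n => (k n : ℝ) * l n * (1 / 2) ^ l n) atTop atTop) :
    Tendsto (fun n => unifProb (ManyPivotalTribes (k n) (l n)
      (⌊(k n : ℝ) * l n * (1 / 2) ^ l n / 4⌋₊ + 1))) atTop (nhds 1) := by
  set μ := fun n => (k n : ℝ) * l n * (1 / 2) ^ l n
  have hbound : Tendsto (fun n => 1 - (2 * (1 - (1 - (1 / 2 : ℝ) ^ l n) ^ k n) + 8 / μ n))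
      atTop (nhds 1) := by
    have hlim := (tendsto_const_nhds (x := (1 : ℝ))).sub
      ((((tendsto_const_nhds (x := (1 : ℝ))).sub h1).const_mul 2).add
        ((tendsto_const_nhds (x := (8 : ℝ))).div_atTop h2))
    simpa using hlim
  refine tendsto_of_tendsto_of_tendsto_of_le_of_le' hbound tendsto_const_nhds ?_
    (Eventually.of_forall fun n => unifProb_le_one _)
  filter_upwards [h2.eventually_ge_atTop 4] with n hμ
  refine one_sub_le_unifProb_manyPivotalTribes ?_ (by linarith)
  have := Nat.floor_le (a := μ n / 4) (by linarith)
  push_cast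
  linarith

theorem stmt1_general (l k : ℕ → ℕ)
    (h1 : Tendsto (fun n => (1 - (1 / 2 : ℝ) ^ l n) ^ k n) atTop (nhds 1))
    (h2 : Tendsto (fun n => (k n : ℝ) * (l n : ℝ) * (1 / 2 : ℝ) ^ l n) atTop atTop)
    (f : (n : ℕ) → Cube (Fin (k n) × Fin (l n)) → ℤ)
    (hf : ∀ n ω, f n ω = tribes (k n) (l n) ω - tribes (k n) (l n) (negCube ω)) :
    Tendsto (fun n => unifProb (fun ω : Cube (Fin (k n) × Fin (l n)) => f n ω = 0))
      atTop (nhds 1) ∧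
    ∃ a : ℕ → ℕ, (∀ n, 0 < a n) ∧ Tendsto a atTop atTop ∧
      Tendsto (fun n =>
          unifProb (fun ω : Cube (Fin (k n) × Fin (l n)) =>
            f n ω = 0 ∧
            a n < (Finset.univ.filter fun x : Fin (k n) × Fin (l n) =>
              f n (flipAt ω x) = 1).card ∧
            a n < (Finset.univ.filter fun x : Fin (k n) × Fin (l n) =>
              f n (flipAt ω x) = -1).card))
        atTop (nhds 1) := by
  set a := fun n => ⌊(k n : ℝ) * l n * (1 / 2) ^ l n / 4⌋₊ + 1
  have hgood := tendsto_unifProb_manyPivotalTribes h1 h2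
  have hlim : ∀ E : (n : ℕ) → Cube (Fin (k n) × Fin (l n)) → Prop,
      (∀ n ω, ManyPivotalTribes (k n) (l n) (a n) ω → E n ω) →
        Tendsto (fun n => unifProb (E n)) atTop (nhds 1) := fun E hE =>
    tendsto_of_tendsto_of_tendsto_of_le_of_le hgood tendsto_const_nhds
      (fun n => unifProb_mono (hE n)) fun n => unifProb_le_one _
  have ha : Tendsto a atTop atTop := tendsto_atTop_mono (fun n => Nat.le_succ _)
    (tendsto_nat_floor_atTop.comp (h2.atTop_div_const four_pos))
  refine ⟨hlim _ fun n ω h => by rw [hf, h.1, h.2.1, sub_zero], a, fun n => Nat.succ_pos _, ha,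
    hlim _ fun n ω h => ?_⟩
  simpa only [hf] using h.tribes_sub_negCube_eq_zero_and_lt_card_flipAt

/-- If `(1 - 2^{-l n})^{k n} → 1` and `k n · l n · 2^{-l n} → ∞`, then for
`f n ω = Tribes(l n, k n)(ω) - Tribes(l n, k n)(-ω)` we have `ℙ[f n = 0] → 1`, and for some
positive integers `a n → ∞`, with probability tending to `1` simultaneously `f n ω = 0`, more
than `a n` single-coordinate flips push `f n` to `1` and more than `a n` flips push it to `-1`. -/
theorem stmt1 (l k : ℕ → ℕ) (hl : ∀ n, 0 < l n) (hk : ∀ n, 0 < k n)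
    (h1 : Tendsto (fun n => (1 - (1 / 2 : ℝ) ^ l n) ^ k n) atTop (nhds 1))
    (h2 : Tendsto (fun n => (k n : ℝ) * (l n : ℝ) * (1 / 2 : ℝ) ^ l n) atTop atTop)
    (f : (n : ℕ) → Cube (Fin (k n) × Fin (l n)) → ℤ)
    (hf : ∀ n ω, f n ω = tribes (k n) (l n) ω - tribes (k n) (l n) (negCube ω)) :
    Tendsto (fun n => unifProb (fun ω : Cube (Fin (k n) × Fin (l n)) => f n ω = 0))
      atTop (nhds 1) ∧
    ∃ a : ℕ → ℕ, (∀ n, 0 < a n) ∧ Tendsto a atTop atTop ∧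
      Tendsto (fun n =>
          unifProb (fun ω : Cube (Fin (k n) × Fin (l n)) =>
            f n ω = 0 ∧
            a n < (Finset.univ.filter fun x : Fin (k n) × Fin (l n) =>
              f n (flipAt ω x) = 1).card ∧
            a n < (Finset.univ.filter fun x : Fin (k n) × Fin (l n) =>
              f n (flipAt ω x) = -1).card))
        atTop (nhds 1) :=
  stmt1_general l k h1 h2 f hf
end

section
/- For positive integers l and k with l ≥ 2, let ω be uniform on {-1,1}^{[k]×[l]}. Then 𝔼[ |𝒫(Tribes(l,k), ω)| | Tribes(l,k)(ω) = 0 ] ≥ k·l·2^{−l}. -/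
open Finset Filter

attribute [local instance] Classical.propDecidable

lemma card_filter_congr {α : Type} {p q : α → Prop} {ip : DecidablePred p}
    {iq : DecidablePred q} (s : Finset α) (h : ∀ a, p a ↔ q a) :
    (@Finset.filter α p ip s).card = (@Finset.filter α q iq s).card := by
  congr 1
  ext a
  simp only [Finset.mem_filter]
  exact and_congr Iff.rfl (h a)

lemma card_rows (k l : ℕ) (p : Fin k → Cube (Fin l) → Prop) :
    (Finset.univ.filter fun ω : Cube (Fin k × Fin l) => ∀ t, p t (fun i => ω (t, i))).card
      = ∏ t : Fin k, (Finset.univ.filter fun g : Cube (Fin l) => p t g).card := by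
  classical
  rw [← Fintype.card_subtype]
  have e : {ω : Cube (Fin k × Fin l) // ∀ t, p t (fun i => ω (t, i))}
      ≃ ∀ t : Fin k, {g : Cube (Fin l) // p t g} :=
    (Equiv.subtypeEquiv (Equiv.curry (Fin k) (Fin l) Bool) (fun ω => Iff.rfl)).trans
      Equiv.subtypePiEquivPi
  rw [Fintype.card_congr e, Fintype.card_pi]
  exact Finset.prod_congr rfl fun t _ => Fintype.card_subtype _

lemma card_exFalse (l : ℕ) :
    (Finset.univ.filter fun g : Cube (Fin l) => ∃ i, g i = false).card = 2 ^ l - 1 := by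
  classical
  have h2 : (Finset.univ.filter fun g : Cube (Fin l) => ¬ ∃ i, g i = false) = {fun _ => true} := by
    ext g
    simp only [Finset.mem_filter, Finset.mem_univ, true_and, Finset.mem_singleton,
      not_exists, Bool.not_eq_false, funext_iff]
  have h := Finset.card_filter_add_card_filter_not (s := Finset.univ)
    (p := fun g : Cube (Fin l) => ∃ i, g i = false)
  rw [h2, Finset.card_singleton, Finset.card_univ] at h
  have hc : Fintype.card (Cube (Fin l)) = 2 ^ l := by
    simp [Cube, Fintype.card_fun]
  rw [hc] at h
  exact Nat.eq_sub_of_add_eq h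

lemma card_pattern (l : ℕ) (i : Fin l) :
    (Finset.univ.filter fun g : Cube (Fin l) =>
      g i = false ∧ ∀ j, j ≠ i → g j = true).card = 1 := by
  classical
  rw [Finset.card_eq_one]
  refine ⟨fun j => if j = i then false else true, ?_⟩
  ext g
  simp only [Finset.mem_filter, Finset.mem_univ, true_and, Finset.mem_singleton]
  constructor
  · rintro ⟨h1, h2⟩
    funext j
    by_cases hj : j = i
    · simp [hj, h1]
    · simp [hj, h2 j hj]
  · rintro rfl
    constructor
    · simp
    · intro j hj; simp [hj]

lemma tribes0_iff (k l : ℕ) (ω : Cube (Fin k × Fin l)) :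
    tribes k l ω = 0 ↔ ∀ t : Fin k, ∃ i : Fin l, ω (t, i) = false := by
  unfold tribes
  by_cases h : ∃ t : Fin k, ∀ i : Fin l, ω (t, i) = true
  · simp only [h, if_true]
    constructor
    · intro h1; exact absurd h1 one_ne_zero
    · intro hall
      obtain ⟨t, ht⟩ := h
      obtain ⟨i, hi⟩ := hall t
      rw [ht i] at hi; exact absurd hi (by simp)
  · simp only [h, if_false, true_iff]
    intro t
    push_neg at h
    obtain ⟨i, hi⟩ := h t
    exact ⟨i, by simpa using hi⟩

lemma joint_iff (k l : ℕ) (t : Fin k) (i : Fin l) (ω : Cube (Fin k × Fin l)) :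
    (tribes k l ω = 0 ∧ tribes k l (flipAt ω (t, i)) ≠ tribes k l ω)
      ↔ ∀ s : Fin k,
          (if s = t then (fun g : Cube (Fin l) => g i = false ∧ ∀ j, j ≠ i → g j = true)
            else fun g : Cube (Fin l) => ∃ j, g j = false) (fun j => ω (s, j)) := by
  constructor
  · rintro ⟨h0, hp⟩
    have h0' := (tribes0_iff k l ω).mp h0
    rw [h0] at hp
    -- tribes of flip ≠ 0 means it is 1, i.e. exists all-true tribe in flip
    have hflip : ∃ s : Fin k, ∀ j : Fin l, flipAt ω (t, i) (s, j) = true := by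
      by_contra hc
      exact hp (by unfold tribes; simp [hc])
    obtain ⟨s, hs⟩ := hflip
    have hst : s = t := by
      by_contra hne
      obtain ⟨j, hj⟩ := h0' s
      have := hs j
      unfold flipAt at this
      rw [if_neg (by simp [hne])] at this
      rw [hj] at this; exact absurd this (by simp)
    rw [hst] at hs
    intro s'
    by_cases hs' : s' = t
    · rw [if_pos hs', hs']
      refine ⟨?_, ?_⟩
      · have h1 := hs i
        unfold flipAt at h1
        rw [if_pos rfl] at h1
        simpa using h1
      · intro j hj
        have h1 := hs j
        unfold flipAt at h1
        rwa [if_neg (by simp [hj])] at h1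
    · rw [if_neg hs']
      exact h0' s'
  · intro h
    have ht := h t
    rw [if_pos rfl] at ht
    obtain ⟨hti', htj'⟩ := ht
    have hti : ω (t, i) = false := hti'
    have htj : ∀ j, j ≠ i → ω (t, j) = true := fun j hj => htj' j hj
    have h0 : tribes k l ω = 0 := by
      rw [tribes0_iff]
      intro s
      by_cases hs : s = t
      · exact ⟨i, by rw [hs]; exact hti⟩
      · have := h s; rw [if_neg hs] at this; exact this
    refine ⟨h0, ?_⟩
    rw [h0]
    have h1 : tribes k l (flipAt ω (t, i)) = 1 := by
      unfold tribes
      rw [if_pos]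
      refine ⟨t, fun j => ?_⟩
      unfold flipAt
      by_cases hj : j = i
      · subst hj; rw [if_pos rfl, hti]; rfl
      · rw [if_neg (by simp [hj]), htj j hj]
    rw [h1]; exact one_ne_zero

lemma key_count (k l : ℕ) (hk : 0 < k) (x : Fin k × Fin l) :
    (Finset.univ.filter fun ω : Cube (Fin k × Fin l) =>
        tribes k l ω = 0 ∧ tribes k l (flipAt ω x) ≠ tribes k l ω).card
      = (2 ^ l - 1) ^ (k - 1) := by
  classical
  obtain ⟨t, i⟩ := x
  have hfc : (Finset.univ.filter fun ω : Cube (Fin k × Fin l) =>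
        tribes k l ω = 0 ∧ tribes k l (flipAt ω (t, i)) ≠ tribes k l ω)
      = Finset.univ.filter fun ω : Cube (Fin k × Fin l) => ∀ s : Fin k,
          (if s = t then (fun g : Cube (Fin l) => g i = false ∧ ∀ j, j ≠ i → g j = true)
            else fun g : Cube (Fin l) => ∃ j, g j = false) (fun j => ω (s, j)) :=
    Finset.filter_congr fun ω _ => by rw [← joint_iff k l t i ω]
  rw [hfc, card_rows]
  have hcards : ∀ s : Fin k,
      (Finset.univ.filter fun g : Cube (Fin l) =>
        (if s = t then (fun g : Cube (Fin l) => g i = false ∧ ∀ j, j ≠ i → g j = true)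
          else fun g : Cube (Fin l) => ∃ j, g j = false) g).card
      = if s = t then 1 else 2 ^ l - 1 := by
    intro s
    by_cases hs : s = t
    · rw [if_pos hs, if_pos hs]
      convert card_pattern l i using 2
      apply Finset.filter_congr_decidable
    · rw [if_neg hs, if_neg hs]
      convert card_exFalse l using 2
      apply Finset.filter_congr_decidable
  rw [Finset.prod_congr rfl fun s _ => hcards s]
  rw [← Finset.prod_erase_mul Finset.univ _ (Finset.mem_univ t)]
  rw [if_pos rfl, mul_one]
  rw [Finset.prod_congr rfl (fun s hs => if_neg (Finset.ne_of_mem_erase hs)),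
    Finset.prod_const, Finset.card_erase_of_mem (Finset.mem_univ t), Finset.card_univ,
    Fintype.card_fin]

lemma cardA (k l : ℕ) :
    (Finset.univ.filter fun ω : Cube (Fin k × Fin l) => tribes k l ω = 0).card
      = (2 ^ l - 1) ^ k := by
  classical
  refine ((card_filter_congr _ fun ω => tribes0_iff k l ω).trans
    ((card_rows k l fun _ g => ∃ i, g i = false).trans ?_))
  refine (Finset.prod_congr rfl fun t _ =>
    (card_filter_congr _ fun g => Iff.rfl).trans (card_exFalse l)).trans ?_
  rw [Finset.prod_const, Finset.card_univ, Fintype.card_fin]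

lemma sum_piv (k l : ℕ) (hk : 0 < k) :
    ∑ ω ∈ Finset.univ.filter (fun ω : Cube (Fin k × Fin l) => tribes k l ω = 0),
        (pivSet (tribes k l) ω).card = (k * l) * (2 ^ l - 1) ^ (k - 1) := by
  classical
  have hpiv : ∀ ω : Cube (Fin k × Fin l), (pivSet (tribes k l) ω).card
      = (Finset.univ.filter fun x : Fin k × Fin l =>
          tribes k l (flipAt ω x) ≠ tribes k l ω).card :=
    fun ω => card_filter_congr _ fun x => Iff.rfl
  rw [Finset.sum_congr rfl fun ω _ => hpiv ω]
  simp only [Finset.card_filter]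
  rw [Finset.sum_comm]
  trans (∑ _x : Fin k × Fin l, (2 ^ l - 1) ^ (k - 1))
  · refine Finset.sum_congr rfl fun x _ => ?_
    rw [← Finset.card_filter, Finset.filter_filter]
    exact (card_filter_congr _ fun ω => Iff.rfl).trans (key_count k l hk x)
  · rw [Finset.sum_const, Finset.card_univ, Fintype.card_prod, Fintype.card_fin,
      Fintype.card_fin, smul_eq_mul]

/-- For `l ≥ 2` and `k ≥ 1`, with `ω` uniform,
`𝔼[ |𝒫(Tribes(l,k), ω)| | Tribes(l,k)(ω) = 0 ] ≥ k·l·2^{-l}`. -/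
theorem stmt10 (l k : ℕ) (hl : 2 ≤ l) (hk : 0 < k) :
    (k : ℝ) * (l : ℝ) * (1 / 2 : ℝ) ^ l ≤
      condExpect (fun ω : Cube (Fin k × Fin l) => ((pivSet (tribes k l) ω).card : ℝ))
        (fun ω => tribes k l ω = 0) := by
  classical
  have hsum := sum_piv k l hk
  have hA := cardA k l
  unfold condExpect
  rw [Finset.filter_congr_decidable]
  rw [← Nat.cast_sum, hsum, hA]
  have hn1 : (1:ℕ) ≤ 2 ^ l - 1 := by
    have h2 : (2:ℕ) ≤ 2 ^ l := by
      calc (2:ℕ) = 2 ^ 1 := rfl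
        _ ≤ 2 ^ l := Nat.pow_le_pow_right (by norm_num) (by omega)
    omega
  have hn0 : (0:ℝ) < ((2 ^ l - 1 : ℕ) : ℝ) := by exact_mod_cast hn1
  have key : ((k * l * (2 ^ l - 1) ^ (k - 1) : ℕ) : ℝ) / (((2 ^ l - 1) ^ k : ℕ) : ℝ)
      = ((k : ℝ) * (l : ℝ)) / ((2 ^ l - 1 : ℕ) : ℝ) := by
    rw [Nat.cast_mul, Nat.cast_mul, Nat.cast_pow, Nat.cast_pow]
    rw [show ((2 ^ l - 1 : ℕ) : ℝ) ^ k
        = ((2 ^ l - 1 : ℕ) : ℝ) ^ (k - 1) * ((2 ^ l - 1 : ℕ) : ℝ) from by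
      rw [← pow_succ, Nat.sub_add_cancel hk]]
    rw [mul_comm ((k : ℝ) * (l : ℝ)) (((2 ^ l - 1 : ℕ) : ℝ) ^ (k - 1)),
      mul_div_mul_left _ _ (pow_ne_zero _ hn0.ne')]
  rw [key]
  rw [div_pow, one_pow, mul_one_div]
  have hle : ((2 ^ l - 1 : ℕ) : ℝ) ≤ (2 : ℝ) ^ l := by
    calc ((2 ^ l - 1 : ℕ) : ℝ) ≤ ((2 ^ l : ℕ) : ℝ) := Nat.cast_le.mpr (Nat.sub_le _ _)
      _ = (2 : ℝ) ^ l := by push_cast; ring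
  exact div_le_div_of_nonneg_left (by positivity) hn0 hle
end

section
/- Let (k_n) be a sequence of integers with k_n ≥ 2 and k_n → ∞, and set l_n = ⌈log₂ k_n + (1/2)·log₂ log₂ k_n⌉. Then k_n · 2^{−l_n} → 0 and k_n · l_n · 2^{−l_n} → ∞ as n → ∞; in particular (1 − 2^{−l_n})^{k_n} → 1. -/
/-!
Write `c = log₂ k` and `x = c + ½ log₂ c`, so that `2 ^ x = k √c`. Since `l = ⌈x⌉` lies in
`[x, x + 1)`, we get `k √c ≤ 2 ^ l ≤ 2 k √c`; hence `k 2^{-l} ≤ 1 / √c → 0`, while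
`l ≥ c` gives `k l 2^{-l} ≥ √c / 2 → ∞`. Bernoulli's inequality then squeezes
`(1 - 2^{-l})^k` between `1 - k 2^{-l}` and `1`.
-/

open Finset Filter

attribute [local instance] Classical.propDecidable

open Real

noncomputable def ceilLogExp (K : ℝ) : ℕ := ⌈logb 2 K + 1 / 2 * logb 2 (logb 2 K)⌉₊

theorem tendsto_one_sub_pow_nhds_one {α : Type*} {f : Filter α} {p : α → ℝ} {m : α → ℕ}
    (hp₀ : ∀ a, 0 ≤ p a) (hp₁ : ∀ a, p a ≤ 1)
    (h : Tendsto (fun a => (m a : ℝ) * p a) f (nhds 0)) :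
    Tendsto (fun a => (1 - p a) ^ m a) f (nhds 1) := by
  have bernoulli : ∀ a, 1 - m a * p a ≤ (1 - p a) ^ m a := fun a => by
    simpa only [← sub_eq_add_neg, mul_neg] using
      one_add_mul_le_pow (by linarith [hp₁ a] : -2 ≤ -p a) (m a)
  have le_one : ∀ a, (1 - p a) ^ m a ≤ 1 := fun a =>
    pow_le_one₀ (by linarith [hp₁ a]) (by linarith [hp₀ a])
  have lower : Tendsto (fun a => 1 - (m a : ℝ) * p a) f (nhds 1) := by
    simpa using (tendsto_const_nhds (x := (1 : ℝ))).sub h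
  exact tendsto_of_tendsto_of_tendsto_of_le_of_le lower tendsto_const_nhds bernoulli le_one

section ceilLogExp

variable {K : ℝ}

theorem two_rpow_logb_add_half_logb_logb (hK : 1 < K) :
    (2 : ℝ) ^ (logb 2 K + 1 / 2 * logb 2 (logb 2 K)) = K * √(logb 2 K) := by
  have hc : 0 < logb 2 K := logb_pos one_lt_two hK
  rw [rpow_add two_pos, rpow_logb two_pos (by norm_num) (by linarith), mul_comm (1 / 2 : ℝ),
    rpow_mul zero_le_two, rpow_logb two_pos (by norm_num) hc, ← sqrt_eq_rpow]

theorem one_le_logb_two (hK : 2 ≤ K) : 1 ≤ logb 2 K := by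
  rwa [le_logb_iff_rpow_le one_lt_two (by linarith), rpow_one]

theorem mul_sqrt_logb_le_two_pow_ceilLogExp (hK : 1 < K) :
    K * √(logb 2 K) ≤ 2 ^ ceilLogExp K := by
  rw [← two_rpow_logb_add_half_logb_logb hK, ← rpow_natCast]
  exact rpow_le_rpow_of_exponent_le one_le_two (Nat.le_ceil _)

theorem two_pow_ceilLogExp_le (hK : 2 ≤ K) :
    2 ^ ceilLogExp K ≤ 2 * (K * √(logb 2 K)) := by
  have hc := one_le_logb_two hK
  have hx : 0 ≤ logb 2 K + 1 / 2 * logb 2 (logb 2 K) := by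
    have := logb_nonneg one_lt_two hc
    positivity
  calc (2 : ℝ) ^ ceilLogExp K = 2 ^ (ceilLogExp K : ℝ) := (rpow_natCast 2 _).symm
    _ ≤ 2 ^ (logb 2 K + 1 / 2 * logb 2 (logb 2 K) + 1) :=
        rpow_le_rpow_of_exponent_le one_le_two (Nat.ceil_lt_add_one hx).le
    _ = 2 * (K * √(logb 2 K)) := by
        rw [rpow_add two_pos, two_rpow_logb_add_half_logb_logb (by linarith), rpow_one, mul_comm]

theorem logb_le_ceilLogExp (hK : 2 ≤ K) : logb 2 K ≤ ceilLogExp K := by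
  have hc := one_le_logb_two hK
  have := logb_nonneg one_lt_two hc
  exact (le_add_of_nonneg_right (by positivity)).trans (Nat.le_ceil _)

theorem mul_half_pow_ceilLogExp_le (hK : 1 < K) :
    K * (1 / 2 : ℝ) ^ ceilLogExp K ≤ (√(logb 2 K))⁻¹ := by
  have hs : 0 < √(logb 2 K) := sqrt_pos.2 (logb_pos one_lt_two hK)
  rw [one_div_pow, ← div_eq_mul_one_div, div_le_iff₀ (by positivity), ← div_eq_inv_mul,
    le_div_iff₀ hs]
  exact mul_sqrt_logb_le_two_pow_ceilLogExp hK

theorem sqrt_logb_div_two_le_mul_ceilLogExp_mul_half_pow (hK : 2 ≤ K) :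
    √(logb 2 K) / 2 ≤ K * ceilLogExp K * (1 / 2 : ℝ) ^ ceilLogExp K := by
  have hc : 0 ≤ logb 2 K := logb_nonneg one_lt_two (by linarith)
  rw [one_div_pow, ← div_eq_mul_one_div, le_div_iff₀ (by positivity)]
  calc √(logb 2 K) / 2 * 2 ^ ceilLogExp K ≤ √(logb 2 K) / 2 * (2 * (K * √(logb 2 K))) := by
        gcongr; exact two_pow_ceilLogExp_le hK
    _ = K * logb 2 K := by linear_combination K * mul_self_sqrt hc
    _ ≤ K * ceilLogExp K := by gcongr; exact logb_le_ceilLogExp hK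

end ceilLogExp

theorem tendsto_sqrt_logb_two_atTop : Tendsto (fun K => √(logb 2 K)) atTop atTop :=
  tendsto_sqrt_atTop.comp (tendsto_logb_atTop one_lt_two)

theorem tendsto_mul_half_pow_ceilLogExp :
    Tendsto (fun K : ℝ => K * (1 / 2 : ℝ) ^ ceilLogExp K) atTop (nhds 0) := by
  refine squeeze_zero' ?_ ?_ (tendsto_inv_atTop_zero.comp tendsto_sqrt_logb_two_atTop)
  · filter_upwards [eventually_ge_atTop 0] with K hK using by positivity
  · filter_upwards [eventually_gt_atTop 1] with K hK using mul_half_pow_ceilLogExp_le hK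

theorem tendsto_mul_ceilLogExp_mul_half_pow :
    Tendsto (fun K : ℝ => K * ceilLogExp K * (1 / 2 : ℝ) ^ ceilLogExp K) atTop atTop := by
  refine tendsto_atTop_mono' _ ?_ (tendsto_sqrt_logb_two_atTop.atTop_div_const two_pos)
  filter_upwards [eventually_ge_atTop 2] with K hK
    using sqrt_logb_div_two_le_mul_ceilLogExp_mul_half_pow hK

theorem stmt13_general (k : ℕ → ℕ) (hk' : Tendsto k atTop atTop)
    (l : ℕ → ℕ)
    (hl : ∀ n, l n =
      ⌈Real.logb 2 (k n) + (1 / 2) * Real.logb 2 (Real.logb 2 (k n))⌉₊) :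
    Tendsto (fun n => (k n : ℝ) * (1 / 2 : ℝ) ^ l n) atTop (nhds 0) ∧
    Tendsto (fun n => (k n : ℝ) * (l n : ℝ) * (1 / 2 : ℝ) ^ l n) atTop atTop ∧
    Tendsto (fun n => (1 - (1 / 2 : ℝ) ^ l n) ^ k n) atTop (nhds 1) := by
  obtain rfl : l = fun n => ceilLogExp (k n) := funext hl
  have hkR : Tendsto (fun n => (k n : ℝ)) atTop atTop := tendsto_natCast_atTop_atTop.comp hk'
  have small := tendsto_mul_half_pow_ceilLogExp.comp hkR
  refine ⟨small, tendsto_mul_ceilLogExp_mul_half_pow.comp hkR, ?_⟩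
  exact tendsto_one_sub_pow_nhds_one (fun _ => by positivity)
    (fun _ => pow_le_one₀ (by norm_num) (by norm_num)) small

/-- If `k n ≥ 2`, `k n → ∞` and
`l n = ⌈log₂ (k n) + (1/2)·log₂ log₂ (k n)⌉`, then `k n · 2^{-l n} → 0` and
`k n · l n · 2^{-l n} → ∞`; in particular `(1 - 2^{-l n})^{k n} → 1`. -/
theorem stmt13 (k : ℕ → ℕ) (hk : ∀ n, 2 ≤ k n) (hk' : Tendsto k atTop atTop)
    (l : ℕ → ℕ)
    (hl : ∀ n, l n =
      ⌈Real.logb 2 (k n) + (1 / 2) * Real.logb 2 (Real.logb 2 (k n))⌉₊) :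
    Tendsto (fun n => (k n : ℝ) * (1 / 2 : ℝ) ^ l n) atTop (nhds 0) ∧
    Tendsto (fun n => (k n : ℝ) * (l n : ℝ) * (1 / 2 : ℝ) ^ l n) atTop atTop ∧
    Tendsto (fun n => (1 - (1 / 2 : ℝ) ^ l n) ^ k n) atTop (nhds 1) :=
  stmt13_general k hk' l hl
end
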